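/- (Han's inequality) For discrete random variables X_1,...,X_n on finite spaces with n ≥ 2, (n−1)·H(X_1,...,X_n) ≤ Σ_{i=1}^n H(X_1,...,X_{i−1},X_{i+1},...,X_n), i.e., n−1 times the joint entropy is at most the sum of the entropies of all (n−1)-element subsets obtained by leaving one variable out. -/

import Mathlib

noncomputable section

/-- Shannon entropy of a distribution on a finite type. -/
def entropy {α : Type*} [Fintype α] (p : α → ℝ) : ℝ :=
  -∑ a, p a * Real.log (p a)

variable {n : ℕ} {X : Fin n → Type*} [∀ i, Fintype (X i)]

open scoped Classical in
/-- Marginal of coordinate `i` of a joint distribution. -/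
def marginal (p : (∀ i, X i) → ℝ) (i : Fin n) (a : X i) : ℝ :=
  ∑ x : ∀ j, X j, if x i = a then p x else 0

open scoped Classical in
/-- Marginal of a joint distribution on the coordinates in `S`. -/
def subMarginal (p : (∀ i, X i) → ℝ) (S : Finset (Fin n)) (z : ∀ i : S, X i.1) : ℝ :=
  ∑ x : ∀ j, X j, if ∀ i : S, x i.1 = z i then p x else 0

open scoped Classical in
/-- Conditional joint distribution given that the coordinates in `S` equal `z`. -/
def condDist (p : (∀ i, X i) → ℝ) (S : Finset (Fin n)) (z : ∀ i : S, X i.1) :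
    (∀ i, X i) → ℝ :=
  fun y => if ∀ i : S, y i.1 = z i then p y / subMarginal p S z else 0

/-- Total correlation of the variables indexed by `S`. -/
def TCsub (p : (∀ i, X i) → ℝ) (S : Finset (Fin n)) : ℝ :=
  (∑ i ∈ S, entropy (marginal p i)) - entropy (subMarginal p S)

/-- Expected conditional total correlation of the variables in `S` given those in `C`. -/
def expCondTC (p : (∀ i, X i) → ℝ) (S C : Finset (Fin n)) : ℝ :=
  ∑ z : ∀ i : C, X i.1, subMarginal p C z * TCsub (condDist p C z) S

/-
Write `P_S` for the marginal and `H_S` for the joint entropy of the coordinates in `S`.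
If `S ∪ T` covers all coordinates, then `H + H_{S ∩ T} ≤ H_S + H_T`: by Gibbs' inequality the
gap is at least `1 - ∑ₓ q x` with `q = P_S P_T / P_{S ∩ T}`, and `∑ₓ q x ≤ 1` because a
configuration is determined by its restrictions to `S` and to `T`, which only have to agree on
`S ∩ T`. Taking `S = {i}ᶜ` and `T = {0, …, i}` and summing over `i`, the differences
`H_{{0,…,i}} - H_{{0,…,i-1}}` telescope to `H`.
-/

open Finset Real

open scoped Classical

def marginalAt (p : (∀ i, X i) → ℝ) (S : Finset (Fin n)) (x : ∀ i, X i) : ℝ :=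
  ∑ y, if ∀ i ∈ S, y i = x i then p y else 0

section Marginals

variable (p : (∀ i, X i) → ℝ)

theorem marginalAt_eq_subMarginal (S : Finset (Fin n)) (x : ∀ i, X i) :
    marginalAt p S x = subMarginal p S (fun i => x i) :=
  sum_congr rfl fun _ _ => if_congr ⟨fun h i => h i.1 i.2, fun h i hi => h ⟨i, hi⟩⟩ rfl rfl

theorem marginalAt_nonneg (hp0 : ∀ x, 0 ≤ p x) (S : Finset (Fin n)) (x : ∀ i, X i) :
    0 ≤ marginalAt p S x :=
  sum_nonneg fun y _ => ite_nonneg (hp0 y) le_rfl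

theorem le_marginalAt (hp0 : ∀ x, 0 ≤ p x) (S : Finset (Fin n)) (x : ∀ i, X i) :
    p x ≤ marginalAt p S x := by
  simpa [marginalAt] using single_le_sum (f := fun y => if ∀ i ∈ S, y i = x i then p y else 0)
    (fun y _ => ite_nonneg (hp0 y) le_rfl) (mem_univ x)

theorem marginalAt_pos (hp0 : ∀ x, 0 ≤ p x) (S : Finset (Fin n)) {x : ∀ i, X i}
    (hx : 0 < p x) : 0 < marginalAt p S x :=
  hx.trans_le (le_marginalAt p hp0 S x)

theorem marginalAt_congr {S : Finset (Fin n)} {x y : ∀ i, X i} (h : ∀ i ∈ S, x i = y i) :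
    marginalAt p S x = marginalAt p S y :=
  sum_congr rfl fun z _ => if_congr (forall₂_congr fun i hi => by rw [h i hi]) rfl rfl

theorem marginalAt_univ (x : ∀ i, X i) : marginalAt p univ x = p x := by
  simp [marginalAt, ← funext_iff]

theorem marginalAt_empty (x : ∀ i, X i) : marginalAt p ∅ x = ∑ y, p y := by
  simp [marginalAt]

theorem sum_subMarginal_mul (S : Finset (Fin n)) (F : (∀ i : S, X i.1) → ℝ) :
    ∑ z, subMarginal p S z * F z = ∑ x, p x * F (fun i => x i) := by
  simp only [subMarginal, sum_mul]
  rw [sum_comm]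
  refine sum_congr rfl fun x _ => ?_
  simp [ite_mul, ← funext_iff]

theorem entropy_subMarginal (S : Finset (Fin n)) :
    entropy (subMarginal p S) = -∑ x, p x * log (marginalAt p S x) := by
  simp only [entropy, sum_subMarginal_mul p S, marginalAt_eq_subMarginal]

theorem entropy_subMarginal_univ : entropy (subMarginal p univ) = entropy p := by
  rw [entropy_subMarginal]
  simp only [marginalAt_univ]
  rfl

theorem entropy_subMarginal_empty (hp1 : ∑ x, p x = 1) : entropy (subMarginal p ∅) = 0 := by
  simp [entropy_subMarginal, marginalAt_empty, hp1]

end Marginals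

theorem mul_log_div_le_sub {a b : ℝ} (ha : 0 ≤ a) (hb : 0 ≤ b) (hab : 0 < a → 0 < b) :
    a * log (b / a) ≤ b - a := by
  rcases ha.eq_or_lt with rfl | ha
  · simpa using hb
  calc a * log (b / a) ≤ a * (b / a - 1) :=
        mul_le_mul_of_nonneg_left (log_le_sub_one_of_pos (div_pos (hab ha) ha)) ha.le
    _ = b - a := by field_simp

section Submodularity

variable (p : (∀ i, X i) → ℝ) {S T : Finset (Fin n)}

theorem sum_ite_marginalAt_eq_marginalAt_inter (hST : S ∪ T = univ) (y : ∀ i, X i) :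
    ∑ x, (if ∀ i ∈ S, y i = x i then marginalAt p T x else 0) = marginalAt p (S ∩ T) y := by
  have hglue : ∀ x z : ∀ i, X i, ((∀ i ∈ S, y i = x i) ∧ ∀ i ∈ T, z i = x i) ↔
      (∀ i ∈ S ∩ T, z i = y i) ∧ x = fun i => if i ∈ S then y i else z i := by
    intro x z
    constructor
    · rintro ⟨hS, hT⟩
      refine ⟨fun i hi => (hT i (mem_inter.1 hi).2).trans (hS i (mem_inter.1 hi).1).symm,
        funext fun i => ?_⟩
      by_cases hi : i ∈ S
      · simp [hi, hS i hi]
      · have hiT : i ∈ T := (mem_union.1 (hST ▸ mem_univ i)).resolve_left hi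
        simp [hi, hT i hiT]
    · rintro ⟨hI, rfl⟩
      refine ⟨fun i hi => by simp [hi], fun i hi => ?_⟩
      by_cases hiS : i ∈ S
      · simp [hiS, hI i (mem_inter.2 ⟨hiS, hi⟩)]
      · simp [hiS]
  simp only [marginalAt, ite_sum_zero, ← ite_and]
  rw [sum_comm]
  refine sum_congr rfl fun z _ => ?_
  simp_rw [hglue, ite_and, sum_ite_irrel, sum_ite_eq', mem_univ, if_true, sum_const_zero]

theorem sum_marginalAt_mul_div_le_one (hp0 : ∀ x, 0 ≤ p x) (hp1 : ∑ x, p x = 1)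
    (hST : S ∪ T = univ) :
    ∑ x, marginalAt p S x * marginalAt p T x / marginalAt p (S ∩ T) x ≤ 1 := by
  have hI : ∀ y x : ∀ i, X i, (∀ i ∈ S, y i = x i) →
      marginalAt p (S ∩ T) x = marginalAt p (S ∩ T) y :=
    fun y x h => marginalAt_congr p fun i hi => (h i (mem_inter.1 hi).1).symm
  calc ∑ x, marginalAt p S x * marginalAt p T x / marginalAt p (S ∩ T) x
      = ∑ x, ∑ y, if ∀ i ∈ S, y i = x i then
          p y * marginalAt p T x / marginalAt p (S ∩ T) y else 0 := by
        refine sum_congr rfl fun x _ => ?_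
        rw [marginalAt, sum_mul, sum_div]
        refine sum_congr rfl fun y _ => ?_
        split_ifs with h
        · rw [hI y x h]
        · simp
    _ = ∑ y, p y * (∑ x, if ∀ i ∈ S, y i = x i then marginalAt p T x else 0) /
          marginalAt p (S ∩ T) y := by
        rw [sum_comm]
        simp only [mul_sum, sum_div, mul_ite, ite_div, mul_zero, zero_div]
    _ = ∑ y, p y * (marginalAt p (S ∩ T) y / marginalAt p (S ∩ T) y) := by
        simp only [sum_ite_marginalAt_eq_marginalAt_inter p hST, mul_div_assoc]
    _ ≤ ∑ y, p y := sum_le_sum fun y _ => mul_le_of_le_one_right (hp0 y) (div_self_le_one _)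
    _ = 1 := hp1

theorem entropy_add_entropy_subMarginal_inter_le (hp0 : ∀ x, 0 ≤ p x) (hp1 : ∑ x, p x = 1)
    (hST : S ∪ T = univ) :
    entropy p + entropy (subMarginal p (S ∩ T)) ≤
      entropy (subMarginal p S) + entropy (subMarginal p T) := by
  set q : (∀ i, X i) → ℝ := fun x =>
    marginalAt p S x * marginalAt p T x / marginalAt p (S ∩ T) x with hq
  have hq0 : ∀ x, 0 ≤ q x := fun x => div_nonneg
    (mul_nonneg (marginalAt_nonneg p hp0 S x) (marginalAt_nonneg p hp0 T x))
    (marginalAt_nonneg p hp0 (S ∩ T) x)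
  have hq_pos : ∀ x, 0 < p x → 0 < q x := fun x hx => div_pos
    (mul_pos (marginalAt_pos p hp0 S hx) (marginalAt_pos p hp0 T hx))
    (marginalAt_pos p hp0 (S ∩ T) hx)
  have hlog : ∀ x, p x * log (q x / p x) = p x * log (marginalAt p S x) +
      p x * log (marginalAt p T x) - p x * log (p x) - p x * log (marginalAt p (S ∩ T) x) := by
    intro x
    rcases (hp0 x).eq_or_lt with h | h
    · simp [← h]
    have hS := marginalAt_pos p hp0 S h
    have hT := marginalAt_pos p hp0 T h
    rw [log_div (hq_pos x h).ne' h.ne', hq,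
      log_div (mul_pos hS hT).ne' (marginalAt_pos p hp0 (S ∩ T) h).ne', log_mul hS.ne' hT.ne']
    ring
  have hgibbs : ∑ x, p x * log (q x / p x) ≤ ∑ x, q x - ∑ x, p x := by
    rw [← sum_sub_distrib]
    exact sum_le_sum fun x _ => mul_log_div_le_sub (hp0 x) (hq0 x) (hq_pos x)
  simp only [hlog, sum_sub_distrib, sum_add_distrib] at hgibbs
  rw [entropy_subMarginal, entropy_subMarginal, entropy_subMarginal, entropy]
  linarith [sum_marginalAt_mul_div_le_one p hp0 hp1 hST]

end Submodularity

def initialCoords (k : ℕ) : Finset (Fin n) :=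
  {j | (j : ℕ) < k}

theorem initialCoords_zero : initialCoords 0 = (∅ : Finset (Fin n)) := by
  ext j; simp [initialCoords]

theorem initialCoords_self : initialCoords n = (univ : Finset (Fin n)) := by
  ext j; simp [initialCoords]

theorem compl_singleton_union_initialCoords (i : Fin n) :
    {i}ᶜ ∪ initialCoords (i + 1) = univ := by
  ext j; simp [initialCoords]; omega

theorem compl_singleton_inter_initialCoords (i : Fin n) :
    {i}ᶜ ∩ initialCoords (i + 1) = initialCoords i := by
  ext j; simp [initialCoords, Fin.ext_iff]; omega

theorem stmt_2_general (n : ℕ) (X : Fin n → Type*) [∀ i, Fintype (X i)]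
    (p : (∀ i, X i) → ℝ) (hp0 : ∀ x, 0 ≤ p x) (hp1 : ∑ x, p x = 1) :
    ((n : ℝ) - 1) * entropy p ≤
      ∑ i : Fin n, entropy (subMarginal p ({i} : Finset (Fin n))ᶜ) := by
  set H : ℕ → ℝ := fun k => entropy (subMarginal p (initialCoords k))
  have hstep : ∀ i : Fin n, entropy p + H i ≤ entropy (subMarginal p {i}ᶜ) + H (i + 1) :=
    fun i => by
      have h := entropy_add_entropy_subMarginal_inter_le p hp0 hp1
        (compl_singleton_union_initialCoords i)
      rwa [compl_singleton_inter_initialCoords] at h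
  have htelescope : ∑ i : Fin n, (H (i + 1) - H i) = entropy p := by
    rw [Fin.sum_univ_eq_sum_range (fun k => H (k + 1) - H k), sum_range_sub]
    simp only [H]
    rw [initialCoords_self, initialCoords_zero, entropy_subMarginal_univ,
      entropy_subMarginal_empty p hp1, sub_zero]
  have hsum := sum_le_sum fun i (_ : i ∈ univ) => hstep i
  rw [sum_add_distrib, sum_add_distrib, sum_const, card_univ, Fintype.card_fin, nsmul_eq_mul]
    at hsum
  rw [sum_sub_distrib] at htelescope
  linarith

/-- Han's inequality: `(n−1)` times the joint entropy is at most the sum of the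
joint entropies of the leave-one-out collections. -/
theorem stmt_2 (n : ℕ) (hn : 2 ≤ n) (X : Fin n → Type*) [∀ i, Fintype (X i)]
    (p : (∀ i, X i) → ℝ) (hp0 : ∀ x, 0 ≤ p x) (hp1 : ∑ x, p x = 1) :
    ((n : ℝ) - 1) * entropy p ≤
      ∑ i : Fin n, entropy (subMarginal p ({i} : Finset (Fin n))ᶜ) :=
  stmt_2_general n X p hp0 hp1
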